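/- (Out-degree reduction preserving path counts.) Let G be a finite directed acyclic graph with vertex set V and edge set E, and let s, t ∈ V. Then there exists a finite directed acyclic graph H with at most |V| + |E| vertices, in which every vertex has out-degree at most 2, together with vertices s', t' of H, such that the number of directed paths from s' to t' in H equals the number of directed paths from s to t in G. (Here a directed path from a to b is a finite sequence a = v₀, v₁, …, v_k = b with an edge from v_i to v_{i+1} for each i; in an acyclic graph there are finitely many such paths.) -/

import Mathlib

variable {α : Type*}

/-- `l` is a directed path from `s` to `t` in the graph with edge set `E`:
a nonempty list of vertices starting at `s`, ending at `t`, with every consecutive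
pair an edge. -/
def IsDiPath (E : Finset (α × α)) (s t : α) (l : List α) : Prop :=
  l.head? = some s ∧ l.getLast? = some t ∧ l.Chain' (fun u v => (u, v) ∈ E)

/-- The directed graph with edge set `E` has no directed cycle. -/
def EdgeAcyclic (E : Finset (α × α)) : Prop :=
  ∀ (k : ℕ) (v : ℕ → α), 1 ≤ k → v k = v 0 → ¬ (∀ j < k, (v j, v (j + 1)) ∈ E)

/-!
Replace the out-edges `u → v₁, …, u → v_k` (with `v₁ < ⋯ < v_k`) of every vertex `u` by the
chain `u → (u, v₁) → ⋯ → (u, v_k)` through one new vertex per edge, together with the exits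
`(u, vᵢ) → vᵢ`. Every vertex then has out-degree at most two, and acyclicity survives because
each new edge either moves along an old edge or stays above the same old vertex and moves up
its chain. On an acyclic graph the path counts `P(x)` to `t` are the unique solution of
`P(x) = [x = t] + ∑_{x → y} P(y)`; on the new graph this recurrence is solved by `P` on the old
vertices and by the tail sums `∑_{j ≥ i} P(v_j)` on the chain vertices `(u, vᵢ)`.
-/

open Relation

namespace Relation

theorem transGen_iff_exists_seq {r : α → α → Prop} {a b : α} :
    TransGen r a b ↔
      ∃ k ≥ 1, ∃ v : ℕ → α, v 0 = a ∧ v k = b ∧ ∀ j < k, r (v j) (v (j + 1)) := by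
  constructor
  · intro h
    induction h with
    | @single b hab => exact ⟨1, le_rfl, fun j => if j = 0 then a else b, rfl, rfl, by
        intro j hj; obtain rfl : j = 0 := by omega
        simpa using hab⟩
    | @tail c d _ hcd ih =>
      obtain ⟨k, hk, v, hv0, hvk, hv⟩ := ih
      refine ⟨k + 1, by omega, fun j => if j ≤ k then v j else d, by simpa using hv0,
        by simp, fun j hj => ?_⟩
      rcases Nat.lt_or_ge j k with hjk | hjk
      · simpa [hjk.le, Nat.succ_le_of_lt hjk] using hv j hjk
      · obtain rfl : j = k := by omega
        simpa [hvk] using hcd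
  · rintro ⟨k, hk, v, rfl, rfl, hv⟩
    induction k, hk using Nat.le_induction with
    | base => exact .single (hv 0 one_pos)
    | succ k _ ih => exact (ih fun j hj => hv j (by omega)).tail (hv k k.lt_succ_self)

end Relation

section Acyclic

variable {E : Finset (α × α)}

theorem edgeAcyclic_iff : EdgeAcyclic E ↔ ∀ a, ¬ TransGen (fun u v => (u, v) ∈ E) a a := by
  simp only [EdgeAcyclic, transGen_iff_exists_seq]
  exact ⟨fun h a ⟨k, hk, v, hv0, hvk, hv⟩ => h k v hk (hvk.trans hv0.symm) hv,
    fun h k v hk hv hedges => h (v 0) ⟨k, hk, v, rfl, hv, hedges⟩⟩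

theorem EdgeAcyclic.of_map_or_lt {β γ : Type*} [Preorder γ] {F : Finset (β × β)}
    (hE : EdgeAcyclic E) (f : β → α) (r : β → γ)
    (hF : ∀ x y, (x, y) ∈ F → (f x, f y) ∈ E ∨ f x = f y ∧ r x < r y) : EdgeAcyclic F := by
  have key : ∀ {x y}, TransGen (fun u v => (u, v) ∈ F) x y →
      TransGen (fun u v => (u, v) ∈ E) (f x) (f y) ∨ f x = f y ∧ r x < r y := by
    intro x y h
    induction h with
    | single hxy => exact (hF _ _ hxy).imp_left .single
    | tail _ hyz ih =>
      rcases ih, hF _ _ hyz with ⟨h | ⟨h, hr⟩, h' | ⟨h', hr'⟩⟩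
      · exact .inl (h.tail h')
      · exact .inl (h' ▸ h)
      · exact .inl (h ▸ .single h')
      · exact .inr ⟨h.trans h', hr.trans hr'⟩
  rw [edgeAcyclic_iff] at hE ⊢
  intro x hx
  rcases key hx with h | ⟨-, h⟩
  exacts [hE _ h, lt_irrefl _ h]

theorem EdgeAcyclic.nodup (hE : EdgeAcyclic E) {l : List α}
    (hl : l.IsChain (fun u v => (u, v) ∈ E)) : l.Nodup := by
  rw [List.nodup_iff_sublist]
  intro a ha
  have hchain : [a, a].IsChain (TransGen fun u v => (u, v) ∈ E) :=
    (hl.imp fun _ _ => TransGen.single (r := fun u v => (u, v) ∈ E)).sublist ha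
  exact edgeAcyclic_iff.1 hE a (by simpa using hchain)

end Acyclic

section Counting

variable {E : Finset (α × α)}

noncomputable def numDiPaths (E : Finset (α × α)) (s t : α) : ℕ :=
  Nat.card {l : List α // IsDiPath E s t l}

theorem isDiPath_iff {s t : α} {l : List α} :
    IsDiPath E s t l ↔
      l.head? = some s ∧ l.getLast? = some t ∧ l.IsChain (fun u v => (u, v) ∈ E) :=
  Iff.rfl

theorem not_isDiPath_nil {s t : α} : ¬ IsDiPath E s t [] := by
  simp [isDiPath_iff]

theorem isDiPath_singleton {s t a : α} : IsDiPath E s t [a] ↔ a = s ∧ a = t := by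
  simp [isDiPath_iff]

theorem isDiPath_cons_cons {s t a b : α} {l : List α} :
    IsDiPath E s t (a :: b :: l) ↔ a = s ∧ (s, b) ∈ E ∧ IsDiPath E b t (b :: l) := by
  simp only [isDiPath_iff, List.head?_cons, Option.some.injEq, List.getLast?_cons_cons,
    List.isChain_cons_cons, true_and]
  constructor
  · rintro ⟨rfl, h, hab, hl⟩; exact ⟨rfl, hab, h, hl⟩
  · rintro ⟨rfl, hab, h, hl⟩; exact ⟨rfl, h, hab, hl⟩

theorem IsDiPath.cons {u v t : α} {l : List α} (huv : (u, v) ∈ E) (h : IsDiPath E v t l) :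
    IsDiPath E u t (u :: l) := by
  obtain _ | ⟨b, l⟩ := l
  · exact absurd h not_isDiPath_nil
  · obtain rfl : b = v := by simpa [isDiPath_iff] using h.1
    exact isDiPath_cons_cons.2 ⟨rfl, huv, h⟩

theorem EdgeAcyclic.finite_diPaths [Finite α] (hE : EdgeAcyclic E) (s t : α) :
    Finite {l : List α // IsDiPath E s t l} := by
  have := Fintype.ofFinite α
  refine ((List.finite_length_le α (Fintype.card α)).subset fun l hl => ?_).to_subtype
  exact (hE.nodup hl.2.2).length_le_card

def diPathsEquiv (E : Finset (α × α)) (u t : α) :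
    {l : List α // IsDiPath E u t l} ≃
      PLift (u = t) ⊕ Σ v : {v : α // (u, v) ∈ E}, {l : List α // IsDiPath E v t l} where
  toFun
    | ⟨[], h⟩ => absurd h not_isDiPath_nil
    | ⟨[_], h⟩ => .inl ⟨(isDiPath_singleton.1 h).1.symm.trans (isDiPath_singleton.1 h).2⟩
    | ⟨_ :: b :: l, h⟩ =>
      .inr ⟨⟨b, (isDiPath_cons_cons.1 h).2.1⟩, ⟨b :: l, (isDiPath_cons_cons.1 h).2.2⟩⟩
  invFun
    | .inl h => ⟨[u], isDiPath_singleton.2 ⟨rfl, h.down⟩⟩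
    | .inr ⟨v, l⟩ => ⟨u :: l.1, l.2.cons v.2⟩
  left_inv
    | ⟨[], h⟩ => absurd h not_isDiPath_nil
    | ⟨[_], h⟩ => by obtain ⟨rfl, -⟩ := isDiPath_singleton.1 h; rfl
    | ⟨_ :: _ :: _, h⟩ => by obtain ⟨rfl, -⟩ := isDiPath_cons_cons.1 h; rfl
  right_inv
    | .inl _ => rfl
    | .inr ⟨_, ⟨[], h⟩⟩ => absurd h not_isDiPath_nil
    | .inr ⟨⟨v, _⟩, ⟨b :: l, h⟩⟩ => by
      obtain rfl : b = v := by simpa [isDiPath_iff] using h.1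
      rfl

def outNbrs [Fintype α] [DecidableEq α] (E : Finset (α × α)) (u : α) : Finset α :=
  Finset.univ.filter fun v => (u, v) ∈ E

@[simp]
theorem mem_outNbrs [Fintype α] [DecidableEq α] {u v : α} : v ∈ outNbrs E u ↔ (u, v) ∈ E := by
  simp [outNbrs]

theorem card_filter_fst_eq_card_outNbrs [Fintype α] [DecidableEq α] (u : α) :
    (E.filter (·.1 = u)).card = (outNbrs E u).card := by
  refine Finset.card_bij (fun p _ => p.2) ?_ ?_ ?_
  · rintro ⟨a, b⟩ h
    obtain ⟨hab, rfl⟩ := Finset.mem_filter.1 h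
    exact mem_outNbrs.2 hab
  · rintro ⟨a, b⟩ h ⟨a', b'⟩ h'
    simp_all
  · intro v hv
    exact ⟨(u, v), Finset.mem_filter.2 ⟨mem_outNbrs.1 hv, rfl⟩, rfl⟩

theorem EdgeAcyclic.numDiPaths_eq [Fintype α] [DecidableEq α] (hE : EdgeAcyclic E) (u t : α) :
    numDiPaths E u t =
      (if u = t then 1 else 0) + ∑ v ∈ outNbrs E u, numDiPaths E v t := by
  have := hE.finite_diPaths
  have hsum : ∑ v ∈ outNbrs E u, numDiPaths E v t =
      ∑ v : {v // (u, v) ∈ E}, numDiPaths E v t :=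
    Finset.sum_subtype _ (fun _ => mem_outNbrs) _
  rw [hsum, numDiPaths, Nat.card_congr (diPathsEquiv E u t), Nat.card_sum, Nat.card_sigma]
  by_cases h : u = t <;> simp [h, numDiPaths]

theorem EdgeAcyclic.wellFounded [Finite α] (hE : EdgeAcyclic E) :
    WellFounded (fun v u => (u, v) ∈ E) := by
  have : Std.Irrefl (TransGen fun v u => (u, v) ∈ E) :=
    ⟨fun a h => edgeAcyclic_iff.1 hE a (transGen_swap.1 h)⟩
  exact (Finite.wellFounded_of_trans_of_irrefl (TransGen fun v u => (u, v) ∈ E)).mono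
    fun _ _ h => TransGen.single h

theorem EdgeAcyclic.eq_numDiPaths [Fintype α] [DecidableEq α] (hE : EdgeAcyclic E) {t : α}
    {f : α → ℕ}
    (hf : ∀ u, f u = (if u = t then 1 else 0) + ∑ v ∈ outNbrs E u, f v)
    (u : α) : f u = numDiPaths E u t := by
  induction u using hE.wellFounded.induction with
  | _ u ih =>
    rw [hf, hE.numDiPaths_eq]
    congr 1
    exact Finset.sum_congr rfl fun v hv => ih v (mem_outNbrs.1 hv)

end Counting

section Relabel

variable {β : Type*} {E : Finset (α × α)}

def relabel (φ : α ≃ β) (E : Finset (α × α)) : Finset (β × β) :=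
  E.map (φ.prodCongr φ).toEmbedding

theorem mem_relabel {φ : α ≃ β} {p : β × β} : p ∈ relabel φ E ↔ (φ.symm p.1, φ.symm p.2) ∈ E :=
  Finset.mem_map_equiv

theorem EdgeAcyclic.relabel (hE : EdgeAcyclic E) (φ : α ≃ β) : EdgeAcyclic (relabel φ E) :=
  hE.of_map_or_lt φ.symm (fun _ => 0) fun _ _ h => .inl (mem_relabel.1 h)

theorem card_filter_fst_relabel [DecidableEq α] [DecidableEq β] (φ : α ≃ β) (u : α) :
    ((relabel φ E).filter (·.1 = φ u)).card = (E.filter (·.1 = u)).card := by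
  rw [relabel, Finset.filter_map, Finset.card_map]
  simp

theorem isDiPath_relabel_map (φ : α ≃ β) {s t : α} {l : List α} :
    IsDiPath (relabel φ E) (φ s) (φ t) (l.map φ) ↔ IsDiPath E s t l := by
  simp [isDiPath_iff, List.isChain_map, mem_relabel]

theorem numDiPaths_relabel (φ : α ≃ β) (s t : α) :
    numDiPaths (relabel φ E) (φ s) (φ t) = numDiPaths E s t :=
  Nat.card_congr ((Equiv.listEquivOfEquiv φ).subtypeEquiv fun _ =>
    (isDiPath_relabel_map φ).symm).symm

end Relabel

section Split

variable [Fintype α] [LinearOrder α] (E : Finset (α × α))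

/- The chain of `u` is `inl u` followed by the vertices `inr (u, v)` in increasing order of `v`;
`splitSrc` names the chain a vertex lies on and `splitPos` its position along it. -/
def splitSrc : α ⊕ E → α
  | .inl u => u
  | .inr e => e.1.1

def splitPos : α ⊕ E → WithBot α
  | .inl _ => ⊥
  | .inr e => e.1.2

def laterNbrs (x : α ⊕ E) : Finset α :=
  Finset.univ.filter fun w => (splitSrc E x, w) ∈ E ∧ splitPos E x < w

def SplitAdj : α ⊕ E → α ⊕ E → Prop
  | x, .inr e => e.1.1 = splitSrc E x ∧ IsLeast ↑(laterNbrs E x) e.1.2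
  | .inl _, .inl _ => False
  | .inr e, .inl v => e.1.2 = v

noncomputable def splitEdges : Finset ((α ⊕ E) × (α ⊕ E)) := by
  classical exact Finset.univ.filter fun p => SplitAdj E p.1 p.2

variable {E}

theorem mem_laterNbrs {x : α ⊕ E} {w : α} :
    w ∈ laterNbrs E x ↔ (splitSrc E x, w) ∈ E ∧ splitPos E x < w := by
  simp [laterNbrs]

theorem mem_splitEdges {x y : α ⊕ E} : (x, y) ∈ splitEdges E ↔ SplitAdj E x y := by
  simp [splitEdges]

theorem splitEdges_acyclic (hE : EdgeAcyclic E) : EdgeAcyclic (splitEdges E) := by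
  refine hE.of_map_or_lt (splitSrc E) (splitPos E) fun x y hxy => ?_
  rw [mem_splitEdges] at hxy
  rcases x with u | e <;> rcases y with v | e'
  · exact hxy.elim
  · exact .inr ⟨hxy.1.symm, (mem_laterNbrs.1 hxy.2.1).2⟩
  · exact .inl (hxy ▸ e.2)
  · exact .inr ⟨hxy.1.symm, (mem_laterNbrs.1 hxy.2.1).2⟩

theorem card_outNbrs_splitEdges_le (x : α ⊕ E) : (outNbrs (splitEdges E) x).card ≤ 2 := by
  have hexit : (outNbrs (splitEdges E) x).toLeft.card ≤ 1 := by
    refine Finset.card_le_one.2 fun a ha b hb => ?_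
    simp only [Finset.mem_toLeft, mem_outNbrs, mem_splitEdges] at ha hb
    rcases x with u | e
    · exact ha.elim
    · exact ha.symm.trans hb
  have hchain : (outNbrs (splitEdges E) x).toRight.card ≤ 1 := by
    refine Finset.card_le_one.2 fun e he e' he' => ?_
    simp only [Finset.mem_toRight, mem_outNbrs, mem_splitEdges, SplitAdj] at he he'
    exact Subtype.ext (Prod.ext (he.1.trans he'.1.symm) (he.2.unique he'.2))
  rw [← Finset.card_toLeft_add_card_toRight]
  omega

variable (E) in
noncomputable def splitPathCount (t : α) : α ⊕ E → ℕ
  | .inl u => numDiPaths E u t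
  | .inr e => numDiPaths E e.1.2 t + ∑ w ∈ laterNbrs E (.inr e), numDiPaths E w t

theorem sum_toRight_outNbrs_splitEdges (t : α) (x : α ⊕ E) :
    ∑ e ∈ (outNbrs (splitEdges E) x).toRight, splitPathCount E t (.inr e) =
      ∑ w ∈ laterNbrs E x, numDiPaths E w t := by
  have mem_toRight {e : E} : e ∈ (outNbrs (splitEdges E) x).toRight ↔
      e.1.1 = splitSrc E x ∧ IsLeast ↑(laterNbrs E x) e.1.2 := by
    simp [mem_splitEdges, SplitAdj]
  rcases (laterNbrs E x).eq_empty_or_nonempty with h | h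
  · rw [h, Finset.sum_empty]
    refine Finset.sum_eq_zero fun e he => ?_
    simpa [h] using (mem_toRight.1 he).2.1
  set m := (laterNbrs E x).min' h
  have hm : m ∈ laterNbrs E x := Finset.min'_mem _ h
  obtain ⟨hmE, hxm⟩ := mem_laterNbrs.1 hm
  set e₀ : E := ⟨(splitSrc E x, m), hmE⟩
  have hnbrs : (outNbrs (splitEdges E) x).toRight = {e₀} := by
    ext e
    rw [mem_toRight, Finset.mem_singleton]
    refine ⟨fun ⟨h₁, h₂⟩ => Subtype.ext (Prod.ext h₁ (h₂.unique (Finset.isLeast_min' _ h))),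
      fun he => he ▸ ⟨rfl, Finset.isLeast_min' _ h⟩⟩
  have hlater : laterNbrs E (.inr e₀) = (laterNbrs E x).erase m := by
    ext w
    rw [Finset.mem_erase, mem_laterNbrs, mem_laterNbrs]
    simp only [splitSrc, splitPos, WithBot.coe_lt_coe, e₀]
    constructor
    · rintro ⟨hw, hmw⟩
      exact ⟨hmw.ne', hw, hxm.trans (WithBot.coe_lt_coe.2 hmw)⟩
    · rintro ⟨hwm, hw, hxw⟩
      exact ⟨hw, lt_of_le_of_ne (Finset.min'_le _ w (mem_laterNbrs.2 ⟨hw, hxw⟩)) hwm.symm⟩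
  rw [hnbrs, Finset.sum_singleton, splitPathCount, hlater]
  exact Finset.add_sum_erase _ (numDiPaths E · t) hm

theorem splitPathCount_eq (hE : EdgeAcyclic E) (t : α) (x : α ⊕ E) :
    splitPathCount E t x =
      (if x = .inl t then 1 else 0) + ∑ y ∈ outNbrs (splitEdges E) x, splitPathCount E t y := by
  rw [← Finset.toLeft_disjSum_toRight (u := outNbrs (splitEdges E) x), Finset.sum_disjSum,
    sum_toRight_outNbrs_splitEdges]
  rcases x with u | e
  · have hexit : (outNbrs (splitEdges E) (.inl u)).toLeft = ∅ := by
      ext a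
      simp [mem_splitEdges, SplitAdj]
    have hlater : laterNbrs E (.inl u) = outNbrs E u := by
      ext w
      simp [mem_laterNbrs, splitSrc, splitPos]
    rw [hexit, hlater, splitPathCount, hE.numDiPaths_eq]
    simp
  · have hexit : (outNbrs (splitEdges E) (.inr e)).toLeft = {e.1.2} := by
      ext a
      simp [mem_splitEdges, SplitAdj, eq_comm]
    simp [hexit, splitPathCount]

theorem numDiPaths_splitEdges (hE : EdgeAcyclic E) (u t : α) :
    numDiPaths (splitEdges E) (.inl u) (.inl t) = numDiPaths E u t :=
  ((splitEdges_acyclic hE).eq_numDiPaths (splitPathCount_eq hE t) (.inl u)).symm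

end Split

theorem outdegree_two_reduction (n : ℕ) (E : Finset (Fin n × Fin n))
    (hacyc : EdgeAcyclic E) (s t : Fin n) :
    ∃ m ≤ n + E.card, ∃ E' : Finset (Fin m × Fin m),
      EdgeAcyclic E' ∧
      (∀ u : Fin m, (E'.filter (fun e => e.1 = u)).card ≤ 2) ∧
      ∃ s' t' : Fin m,
        Nat.card {l : List (Fin m) // IsDiPath E' s' t' l} =
          Nat.card {l : List (Fin n) // IsDiPath E s t l} := by
  let φ : Fin n ⊕ E ≃ Fin (n + E.card) := Fintype.equivFinOfCardEq (by simp)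
  refine ⟨n + E.card, le_rfl, relabel φ (splitEdges E), (splitEdges_acyclic hacyc).relabel φ,
    fun u => ?_, φ (.inl s), φ (.inl t), ?_⟩
  · rw [← φ.apply_symm_apply u, card_filter_fst_relabel, card_filter_fst_eq_card_outNbrs]
    exact card_outNbrs_splitEdges_le _
  · exact (numDiPaths_relabel φ _ _).trans (numDiPaths_splitEdges hacyc s t)
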